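/- arXiv:1901.01720 — 2 statements merged into one kernel-verified Lean document; each statement's English description precedes it below -/
import Mathlib

section
/- Let F be ℝ or ℂ and let m, n be positive integers. Let φ : M_{mn}(F) → M_{mn}(F) be the linear map φ(M) = M + Σ_{j=1}^r (A_j ⊗ C_j) M (B_j ⊗ D_j), where A_j, B_j ∈ M_m(F) and C_j, D_j ∈ M_n(F). Then tr(φ(A ⊕ B)) = tr(A ⊕ B) for all A ∈ M_m(F) and B ∈ M_n(F) if and only if tr₁(φ(I_{mn}) − I_{mn}) = Σ_{j=1}^r tr(A_jB_j)·[C_j, D_j]₊ and tr₂(φ(I_{mn}) − I_{mn}) = Σ_{j=1}^r tr(C_jD_j)·[A_j, B_j]₊, where [X,Y]₊ = XY + YX is the anti-commutator. -/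
open Matrix Kronecker BigOperators

/-- The Kronecker sum `A ⊕ B = A ⊗ Iₙ + Iₘ ⊗ B`. -/
def kronSum {F : Type*} [CommRing F] {m n : ℕ}
    (A : Matrix (Fin m) (Fin m) F) (B : Matrix (Fin n) (Fin n) F) :
    Matrix (Fin m × Fin n) (Fin m × Fin n) F :=
  A ⊗ₖ (1 : Matrix (Fin n) (Fin n) F) + (1 : Matrix (Fin m) (Fin m) F) ⊗ₖ B

/-- The first partial trace `tr₁(P) = Σⱼ Pⱼⱼ` (sum of the diagonal blocks). -/
def ptrace1 {F : Type*} [AddCommMonoid F] {m n : ℕ}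
    (P : Matrix (Fin m × Fin n) (Fin m × Fin n) F) :
    Matrix (Fin n) (Fin n) F :=
  Matrix.of fun a b => ∑ k : Fin m, P (k, a) (k, b)

/-- The second partial trace `tr₂(P) = Σ_{k,l} tr(P_{kl}) E_{kl}` (blockwise trace). -/
def ptrace2 {F : Type*} [AddCommMonoid F] {m n : ℕ}
    (P : Matrix (Fin m × Fin n) (Fin m × Fin n) F) :
    Matrix (Fin m) (Fin m) F :=
  Matrix.of fun k l => ∑ a : Fin n, P (k, a) (l, a)

/-!
Expanding `(Aⱼ ⊗ Cⱼ)(X ⊗ I + I ⊗ Y)(Bⱼ ⊗ Dⱼ)` and using `tr (P ⊗ Q) = tr P · tr Q` together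
with cyclicity of the trace gives
`tr φ(X ⊕ Y) - tr (X ⊕ Y) = tr (X S) + tr (Y T)` with `S = Σⱼ tr(CⱼDⱼ) BⱼAⱼ` and
`T = Σⱼ tr(AⱼBⱼ) DⱼCⱼ`. Since the trace form is nondegenerate, `φ` preserves the trace of
all Kronecker sums iff `S = T = 0`. On the other side, `φ(I) - I = Σⱼ AⱼBⱼ ⊗ CⱼDⱼ`, whose partial
traces are `Σⱼ tr(AⱼBⱼ) CⱼDⱼ` and `Σⱼ tr(CⱼDⱼ) AⱼBⱼ`; these agree with the anti-commutator
sums exactly when `T = 0`, resp. `S = 0`.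
-/

namespace Matrix

variable {R : Type*} {m n : Type*} [Fintype m] [Fintype n]

theorem eq_zero_iff_forall_trace_mul_eq_zero [NonAssocSemiring R] {M : Matrix m n R} :
    M = 0 ↔ ∀ X : Matrix n m R, (X * M).trace = 0 := by
  simp [ext_iff_trace_mul_left (B := (0 : Matrix m n R))]

theorem forall_trace_mul_add_trace_mul_eq_zero_iff [NonAssocSemiring R]
    {S : Matrix m m R} {T : Matrix n n R} :
    (∀ (X : Matrix m m R) (Y : Matrix n n R), (X * S).trace + (Y * T).trace = 0) ↔
      S = 0 ∧ T = 0 := by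
  refine ⟨fun h => ⟨?_, ?_⟩, fun ⟨hS, hT⟩ X Y => by simp [hS, hT]⟩
  · exact eq_zero_iff_forall_trace_mul_eq_zero.2 fun X => by simpa using h X 0
  · exact eq_zero_iff_forall_trace_mul_eq_zero.2 fun Y => by simpa using h 0 Y

end Matrix

section PartialTrace

variable {F : Type*} {m n : ℕ}

theorem ptrace1_kronecker [Semiring F] (A : Matrix (Fin m) (Fin m) F)
    (B : Matrix (Fin n) (Fin n) F) : ptrace1 (A ⊗ₖ B) = A.trace • B := by
  ext a b
  simp [ptrace1, trace, Finset.sum_mul]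

theorem ptrace2_kronecker [CommSemiring F] (A : Matrix (Fin m) (Fin m) F)
    (B : Matrix (Fin n) (Fin n) F) : ptrace2 (A ⊗ₖ B) = B.trace • A := by
  ext k l
  simp [ptrace2, trace, Finset.mul_sum, mul_comm]

theorem ptrace1_sum [AddCommMonoid F] {ι : Type*} (s : Finset ι)
    (P : ι → Matrix (Fin m × Fin n) (Fin m × Fin n) F) :
    ptrace1 (∑ j ∈ s, P j) = ∑ j ∈ s, ptrace1 (P j) := by
  ext a b
  simp only [ptrace1, of_apply, Matrix.sum_apply]
  exact Finset.sum_comm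

theorem ptrace2_sum [AddCommMonoid F] {ι : Type*} (s : Finset ι)
    (P : ι → Matrix (Fin m × Fin n) (Fin m × Fin n) F) :
    ptrace2 (∑ j ∈ s, P j) = ∑ j ∈ s, ptrace2 (P j) := by
  ext k l
  simp only [ptrace2, of_apply, Matrix.sum_apply]
  exact Finset.sum_comm

end PartialTrace

section KronSum

variable {F : Type*} [CommRing F] {m n : ℕ}

theorem trace_kronecker_mul_kronSum_mul_kronecker
    (A B X : Matrix (Fin m) (Fin m) F) (C D Y : Matrix (Fin n) (Fin n) F) :
    ((A ⊗ₖ C) * kronSum X Y * (B ⊗ₖ D)).trace =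
      (C * D).trace * (X * (B * A)).trace + (A * B).trace * (Y * (D * C)).trace := by
  have hexpand : (A ⊗ₖ C) * kronSum X Y * (B ⊗ₖ D) =
      (A * X * B) ⊗ₖ (C * D) + (A * B) ⊗ₖ (C * Y * D) := by
    simp only [kronSum, mul_add, add_mul, ← mul_kronecker_mul, mul_one]
  rw [hexpand, trace_add, trace_kronecker, trace_kronecker, mul_comm (A * X * B).trace,
    trace_mul_cycle A, trace_mul_comm (B * A), trace_mul_cycle C, trace_mul_comm (D * C)]

theorem trace_sum_kronecker_mul_kronSum_mul_kronecker {r : ℕ}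
    (A B : Fin r → Matrix (Fin m) (Fin m) F) (C D : Fin r → Matrix (Fin n) (Fin n) F)
    (X : Matrix (Fin m) (Fin m) F) (Y : Matrix (Fin n) (Fin n) F) :
    (∑ j, (A j ⊗ₖ C j) * kronSum X Y * (B j ⊗ₖ D j)).trace =
      (X * ∑ j, (C j * D j).trace • (B j * A j)).trace +
        (Y * ∑ j, (A j * B j).trace • (D j * C j)).trace := by
  simp only [trace_sum, trace_kronecker_mul_kronSum_mul_kronecker, Matrix.mul_sum,
    Matrix.mul_smul, trace_smul, smul_eq_mul, Finset.sum_add_distrib]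

end KronSum

theorem trace_kronSum_preserved_iff_anticommutator_general
    {F : Type*} [RCLike F] {m n r : ℕ}
    (A B : Fin r → Matrix (Fin m) (Fin m) F)
    (C D : Fin r → Matrix (Fin n) (Fin n) F)
    (φ : Matrix (Fin m × Fin n) (Fin m × Fin n) F →
         Matrix (Fin m × Fin n) (Fin m × Fin n) F)
    (hφ : ∀ M, φ M = M + ∑ j : Fin r, (A j ⊗ₖ C j) * M * (B j ⊗ₖ D j)) :
    (∀ (X : Matrix (Fin m) (Fin m) F) (Y : Matrix (Fin n) (Fin n) F),
        (φ (kronSum X Y)).trace = (kronSum X Y).trace) ↔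
      (ptrace1 (φ 1 - 1) = ∑ j : Fin r, (A j * B j).trace • (C j * D j + D j * C j) ∧
       ptrace2 (φ 1 - 1) = ∑ j : Fin r, (C j * D j).trace • (A j * B j + B j * A j)) := by
  have hφ1 : φ 1 - 1 = ∑ j, (A j * B j) ⊗ₖ (C j * D j) := by
    simp [hφ, ← mul_kronecker_mul]
  calc (∀ X Y, (φ (kronSum X Y)).trace = (kronSum X Y).trace)
      ↔ ∀ (X : Matrix (Fin m) (Fin m) F) (Y : Matrix (Fin n) (Fin n) F),
          (X * ∑ j, (C j * D j).trace • (B j * A j)).trace +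
          (Y * ∑ j, (A j * B j).trace • (D j * C j)).trace = 0 := by
        simp only [hφ, trace_add, trace_sum_kronecker_mul_kronSum_mul_kronecker, add_eq_left]
    _ ↔ (∑ j, (C j * D j).trace • (B j * A j) = 0 ∧
          ∑ j, (A j * B j).trace • (D j * C j) = 0) :=
        forall_trace_mul_add_trace_mul_eq_zero_iff
    _ ↔ _ := by
        simp only [hφ1, ptrace1_sum, ptrace2_sum, ptrace1_kronecker, ptrace2_kronecker, smul_add,
          Finset.sum_add_distrib, left_eq_add]
        exact and_comm

/-- Lemma 3.4: for `φ(M) = M + Σⱼ (Aⱼ ⊗ Cⱼ) M (Bⱼ ⊗ Dⱼ)`, the map `φ` preserves the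
trace of all Kronecker sums iff
`tr₁(φ(I) − I) = Σⱼ tr(AⱼBⱼ)·[Cⱼ,Dⱼ]₊` and `tr₂(φ(I) − I) = Σⱼ tr(CⱼDⱼ)·[Aⱼ,Bⱼ]₊`,
where `[X,Y]₊ = XY + YX` is the anti-commutator. -/
theorem trace_kronSum_preserved_iff_anticommutator
    {F : Type*} [RCLike F] {m n r : ℕ} (hm : 0 < m) (hn : 0 < n)
    (A B : Fin r → Matrix (Fin m) (Fin m) F)
    (C D : Fin r → Matrix (Fin n) (Fin n) F)
    (φ : Matrix (Fin m × Fin n) (Fin m × Fin n) F →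
         Matrix (Fin m × Fin n) (Fin m × Fin n) F)
    (hφ : ∀ M, φ M = M + ∑ j : Fin r, (A j ⊗ₖ C j) * M * (B j ⊗ₖ D j)) :
    (∀ (X : Matrix (Fin m) (Fin m) F) (Y : Matrix (Fin n) (Fin n) F),
        (φ (kronSum X Y)).trace = (kronSum X Y).trace) ↔
      (ptrace1 (φ 1 - 1) = ∑ j : Fin r, (A j * B j).trace • (C j * D j + D j * C j) ∧
       ptrace2 (φ 1 - 1) = ∑ j : Fin r, (C j * D j).trace • (A j * B j + B j * A j)) :=
  trace_kronSum_preserved_iff_anticommutator_general A B C D φ hφ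
end

section
/- Let m, n be positive integers. Let φ : M_{mn}(ℂ) → M_{mn}(ℂ) be a linear RT-Hermitian map, i.e. tr(φ(A)·B) equals the complex conjugate of tr(φ(B̄)·Ā) for all A, B ∈ M_{mn}(ℂ), where X̄ denotes entrywise complex conjugation. Then tr(φ(A ⊕ B)) = tr(A ⊕ B) for all A ∈ M_m(ℂ) and B ∈ M_n(ℂ) if and only if tr₁(φ(I_{mn})) = m·I_n and tr₂(φ(I_{mn})) = n·I_m. -/
open Matrix Kronecker BigOperators

section PartialTrace

variable {F : Type*} {m n : ℕ}

theorem trace_mul_kronecker_one [Semiring F] (P : Matrix (Fin m × Fin n) (Fin m × Fin n) F)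
    (X : Matrix (Fin m) (Fin m) F) :
    (P * (X ⊗ₖ (1 : Matrix (Fin n) (Fin n) F))).trace = (ptrace2 P * X).trace := by
  simp only [trace, diag, mul_apply, ptrace2, of_apply, kroneckerMap_apply, one_apply,
    Fintype.sum_prod_type, mul_ite, mul_one, mul_zero, Finset.sum_ite_eq', Finset.mem_univ,
    if_true, Finset.sum_mul]
  exact Finset.sum_congr rfl fun _ _ => Finset.sum_comm

theorem trace_mul_one_kronecker [Semiring F] (P : Matrix (Fin m × Fin n) (Fin m × Fin n) F)
    (Y : Matrix (Fin n) (Fin n) F) :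
    (P * ((1 : Matrix (Fin m) (Fin m) F) ⊗ₖ Y)).trace = (ptrace1 P * Y).trace := by
  simp only [trace, diag, mul_apply, ptrace1, of_apply, kroneckerMap_apply, one_apply,
    Fintype.sum_prod_type, ite_mul, one_mul, zero_mul, mul_ite, mul_zero,
    Finset.sum_mul]
  calc _ = ∑ k, ∑ a, ∑ b, P (k, a) (k, b) * Y b a :=
        Finset.sum_congr rfl fun k _ => Finset.sum_congr rfl fun a _ => by
          rw [Finset.sum_comm]; simp only [Finset.sum_ite_eq', Finset.mem_univ, if_true]
    _ = _ := by
      rw [Finset.sum_comm]; exact Finset.sum_congr rfl fun _ _ => Finset.sum_comm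

theorem ptrace1_one [Semiring F] :
    ptrace1 (1 : Matrix (Fin m × Fin n) (Fin m × Fin n) F) = (m : F) • 1 := by
  ext a b
  by_cases h : a = b <;> simp [ptrace1, one_apply, h]

theorem ptrace2_one [Semiring F] :
    ptrace2 (1 : Matrix (Fin m × Fin n) (Fin m × Fin n) F) = (n : F) • 1 := by
  ext k l
  by_cases h : k = l <;> simp [ptrace2, one_apply, h]

theorem trace_mul_kronSum [CommRing F] (P : Matrix (Fin m × Fin n) (Fin m × Fin n) F)
    (X : Matrix (Fin m) (Fin m) F) (Y : Matrix (Fin n) (Fin n) F) :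
    (P * kronSum X Y).trace = (ptrace2 P * X).trace + (ptrace1 P * Y).trace := by
  rw [kronSum, mul_add, trace_add, trace_mul_kronecker_one, trace_mul_one_kronecker]

theorem forall_trace_mul_kronSum_eq_iff [CommRing F]
    (P Q : Matrix (Fin m × Fin n) (Fin m × Fin n) F) :
    (∀ X Y, (P * kronSum X Y).trace = (Q * kronSum X Y).trace) ↔
      ptrace1 P = ptrace1 Q ∧ ptrace2 P = ptrace2 Q := by
  simp only [trace_mul_kronSum]
  refine ⟨fun h => ⟨?_, ?_⟩, fun ⟨h1, h2⟩ _ _ => by rw [h1, h2]⟩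
  · exact ext_iff_trace_mul_right.2 fun Y => by simpa using h 0 Y
  · exact ext_iff_trace_mul_right.2 fun X => by simpa using h X 0

theorem forall_trace_mul_kronSum_eq_trace_iff [CommRing F]
    (P : Matrix (Fin m × Fin n) (Fin m × Fin n) F) :
    (∀ X Y, (P * kronSum X Y).trace = (kronSum X Y).trace) ↔
      ptrace1 P = (m : F) • 1 ∧ ptrace2 P = (n : F) • 1 := by
  simpa only [one_mul, ptrace1_one, ptrace2_one] using forall_trace_mul_kronSum_eq_iff P 1

theorem kronSum_map {G : Type*} [CommRing F] [CommRing G] (f : F →+* G)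
    (X : Matrix (Fin m) (Fin m) F) (Y : Matrix (Fin n) (Fin n) F) :
    (kronSum X Y).map f = kronSum (X.map f) (Y.map f) := by
  ext
  simp only [kronSum, map_apply, Matrix.add_apply, kroneckerMap_apply, one_apply, map_add, map_mul,
    apply_ite, map_one, map_zero]

end PartialTrace

theorem Matrix.map_starRingEnd_map_starRingEnd {ι κ R : Type*} [CommSemiring R] [StarRing R]
    (A : Matrix ι κ R) : (A.map (starRingEnd R)).map (starRingEnd R) = A := by
  ext
  simp only [map_apply, starRingEnd_apply, star_star]

theorem trace_kronSum_preserved_iff_of_rt_hermitian_general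
    {m n : ℕ}
    (φ : Matrix (Fin m × Fin n) (Fin m × Fin n) ℂ →ₗ[ℂ]
         Matrix (Fin m × Fin n) (Fin m × Fin n) ℂ)
    (hherm : ∀ A B : Matrix (Fin m × Fin n) (Fin m × Fin n) ℂ,
        (φ A * B).trace =
          (starRingEnd ℂ)
            ((φ (B.map (starRingEnd ℂ)) * A.map (starRingEnd ℂ)).trace)) :
    (∀ (X : Matrix (Fin m) (Fin m) ℂ) (Y : Matrix (Fin n) (Fin n) ℂ),
        (φ (kronSum X Y)).trace = (kronSum X Y).trace) ↔
      (ptrace1 (φ 1) = (m : ℂ) • (1 : Matrix (Fin n) (Fin n) ℂ) ∧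
       ptrace2 (φ 1) = (n : ℂ) • (1 : Matrix (Fin m) (Fin m) ℂ)) := by
  have trace_φ (A) : (φ A).trace = starRingEnd ℂ (φ 1 * A.map (starRingEnd ℂ)).trace := by
    simpa using hherm A 1
  calc (∀ X Y, (φ (kronSum X Y)).trace = (kronSum X Y).trace)
      ↔ ∀ (X : Matrix (Fin m) (Fin m) ℂ) (Y : Matrix (Fin n) (Fin n) ℂ),
          (φ 1 * kronSum (X.map (starRingEnd ℂ)) (Y.map (starRingEnd ℂ))).trace =
            (kronSum (X.map (starRingEnd ℂ)) (Y.map (starRingEnd ℂ))).trace := by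
        refine forall₂_congr fun X Y => ?_
        rw [trace_φ, ← kronSum_map, ← AddMonoidHom.map_trace]
        exact Function.Involutive.eq_iff Complex.conj_conj
    _ ↔ ∀ X Y, (φ 1 * kronSum X Y).trace = (kronSum X Y).trace :=
        ⟨fun h X Y => by
          simpa only [map_starRingEnd_map_starRingEnd] using
            h (X.map (starRingEnd ℂ)) (Y.map (starRingEnd ℂ)),
        fun h _ _ => h _ _⟩
    _ ↔ _ := forall_trace_mul_kronSum_eq_trace_iff _

/-- An RT-Hermitian linear map `φ` on complex matrices (i.e.
`tr(φ(A)B) = conj(tr(φ(B̄)Ā))` for all `A, B`, where `X̄` is entrywise conjugation)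
preserves the trace of all Kronecker sums iff
`tr₁(φ(I)) = m·Iₙ` and `tr₂(φ(I)) = n·Iₘ`. -/
theorem trace_kronSum_preserved_iff_of_rt_hermitian
    {m n : ℕ} (hm : 0 < m) (hn : 0 < n)
    (φ : Matrix (Fin m × Fin n) (Fin m × Fin n) ℂ →ₗ[ℂ]
         Matrix (Fin m × Fin n) (Fin m × Fin n) ℂ)
    (hherm : ∀ A B : Matrix (Fin m × Fin n) (Fin m × Fin n) ℂ,
        (φ A * B).trace =
          (starRingEnd ℂ)
            ((φ (B.map (starRingEnd ℂ)) * A.map (starRingEnd ℂ)).trace)) :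
    (∀ (X : Matrix (Fin m) (Fin m) ℂ) (Y : Matrix (Fin n) (Fin n) ℂ),
        (φ (kronSum X Y)).trace = (kronSum X Y).trace) ↔
      (ptrace1 (φ 1) = (m : ℂ) • (1 : Matrix (Fin n) (Fin n) ℂ) ∧
       ptrace2 (φ 1) = (n : ℂ) • (1 : Matrix (Fin m) (Fin m) ℂ)) :=
  trace_kronSum_preserved_iff_of_rt_hermitian_general φ hherm
end
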